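/- Consider the autoencoder case Y = X with N = 2, d_0 = d_1 = d_2 = 1 and X = Y = 1 (scalars). The gradient flow of L^2(W_1, W_2) = (1/2)(1 - W_2 W_1)^2 with initial conditions W_1(0) = 1, W_2(0) = -1 (balanced) is solved by W_1(t) = 1/√(2 e^{2t} - 1), W_2(t) = -1/√(2 e^{2t} - 1); in particular W(t) = W_2(t) W_1(t) → 0 as t → ∞, even though rank W(0) = 1. -/

import Mathlib

/-!
Balancedness is preserved, so `W₂ = -W₁` and the flow collapses to the Bernoulli equation
`w' = -w³ - w`. The substitution `u = w⁻²` linearises it to `u' = 2u + 2`, whose solution with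
`u(0) = 1` is `u = 2e^{2t} - 1`; the end-to-end product is `W₂ W₁ = -w² = -1/u → 0`.
-/

noncomputable def W1sol (t : ℝ) : ℝ := 1 / Real.sqrt (2 * Real.exp (2 * t) - 1)

noncomputable def W2sol (t : ℝ) : ℝ := -(1 / Real.sqrt (2 * Real.exp (2 * t) - 1))

open Real Filter

theorem W2sol_eq_neg_W1sol : W2sol = fun t => -W1sol t := rfl

theorem two_mul_exp_two_mul_sub_one_pos {t : ℝ} (ht : 0 ≤ t) : 0 < 2 * exp (2 * t) - 1 := by
  linarith [one_le_exp (by linarith : 0 ≤ 2 * t)]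

theorem hasDerivAt_two_mul_exp_two_mul_sub_one (t : ℝ) :
    HasDerivAt (fun t => 2 * exp (2 * t) - 1) (4 * exp (2 * t)) t := by
  refine ((((hasDerivAt_id t).const_mul 2).exp.const_mul 2).sub_const 1).congr_deriv ?_
  simp only [id, mul_one]
  ring

theorem hasDerivAt_W1sol {t : ℝ} (ht : 0 < 2 * exp (2 * t) - 1) :
    HasDerivAt W1sol (-W1sol t ^ 3 - W1sol t) t := by
  set r := √(2 * exp (2 * t) - 1) with hr
  have hr_pos : 0 < r := sqrt_pos.2 ht
  have hr_sq : r ^ 2 = 2 * exp (2 * t) - 1 := sq_sqrt ht.le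
  refine ((hasDerivAt_const t (1 : ℝ)).fun_div
    ((hasDerivAt_two_mul_exp_two_mul_sub_one t).sqrt ht.ne') hr_pos.ne').congr_deriv ?_
  simp only [W1sol, ← hr]
  field_simp
  linear_combination 2 * hr_sq

theorem W2sol_mul_W1sol {t : ℝ} (ht : 0 ≤ 2 * exp (2 * t) - 1) :
    W2sol t * W1sol t = -(2 * exp (2 * t) - 1)⁻¹ := by
  rw [W2sol, W1sol, neg_mul, div_mul_div_comm, one_mul, mul_self_sqrt ht, one_div]

theorem tendsto_two_mul_exp_two_mul_sub_one_atTop :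
    Tendsto (fun t => 2 * exp (2 * t) - 1) atTop atTop :=
  tendsto_atTop_add_const_right _ (-1)
    ((tendsto_exp_atTop.comp (tendsto_id.const_mul_atTop two_pos)).const_mul_atTop two_pos)

/-- For the scalar two-layer autoencoder (d₀ = d₁ = d₂ = 1, X = Y = 1), the gradient flow
Ẇ₁ = -W₂² W₁ + W₂, Ẇ₂ = -W₂ W₁² + W₁ with balanced initial data W₁(0) = 1, W₂(0) = -1
is solved by W₁(t) = 1/√(2e^{2t}-1), W₂(t) = -1/√(2e^{2t}-1); in particular the product
W = W₂ W₁ has rank 1 at time 0 (W(0) = -1 ≠ 0) yet tends to 0 as t → ∞. -/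
theorem stmt18 :
    W1sol 0 = 1 ∧ W2sol 0 = -1 ∧
    (∀ t : ℝ, 0 ≤ t →
      HasDerivAt W1sol (-(W2sol t) ^ 2 * W1sol t + W2sol t) t) ∧
    (∀ t : ℝ, 0 ≤ t →
      HasDerivAt W2sol (-(W2sol t) * (W1sol t) ^ 2 + W1sol t) t) ∧
    W2sol 0 * W1sol 0 ≠ 0 ∧
    Filter.Tendsto (fun t => W2sol t * W1sol t) Filter.atTop (nhds 0) := by
  have hW1 : W1sol 0 = 1 := by norm_num [W1sol]
  have hW2 : W2sol 0 = -1 := by norm_num [W2sol]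
  refine ⟨hW1, hW2, fun t ht => ?_, fun t ht => ?_, by norm_num [hW1, hW2], ?_⟩
  · refine (hasDerivAt_W1sol (two_mul_exp_two_mul_sub_one_pos ht)).congr_deriv ?_
    simp only [W2sol_eq_neg_W1sol]
    ring
  · refine (hasDerivAt_W1sol (two_mul_exp_two_mul_sub_one_pos ht)).fun_neg.congr_deriv ?_
    simp only [W2sol_eq_neg_W1sol]
    ring
  · have h := tendsto_two_mul_exp_two_mul_sub_one_atTop.inv_tendsto_atTop.neg
    rw [neg_zero] at h
    refine h.congr' ?_
    filter_upwards [eventually_ge_atTop 0] with t ht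
    exact (W2sol_mul_W1sol (two_mul_exp_two_mul_sub_one_pos ht).le).symm
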